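/- arXiv:1511.04894 — 2 statements merged into one kernel-verified Lean document; each statement's English description precedes it below -/
import Mathlib

section
/- Let (Q, μ) be a finite measure space, let (a_n)_{n∈ℕ} be a sequence in L¹(Q) that is bounded in L¹(Q), and let a₀ ∈ L¹(Q) with a₀ ≥ 0. Assume: (A1) a_n ≥ −a₀ a.e. for every n; (A2) a_n converges to a ∈ L¹(Q) in the biting sense, i.e. there exists a nonincreasing sequence of measurable sets E_k ⊆ Q with μ(E_k) → 0 such that for every k and every g ∈ L^∞(Q), ∫_{Q∖E_k} a_n g dμ → ∫_{Q∖E_k} a g dμ as n → ∞; (A3) limsup_{n→∞} ∫_Q a_n dμ ≤ ∫_Q a dμ. Then a_n converges to a weakly in L¹(Q), i.e. ∫_Q a_n g dμ → ∫_Q a g dμ for every g ∈ L^∞(Q). -/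
/-! Since `a_n ≥ -a₀`, we have `|a_n| ≤ a_n + 2|a₀|`. On the exceptional set `E_k`, (A3) combined
with the biting convergence of `∫_{E_kᶜ} a_n` bounds `∫_{E_k} a_n` eventually by `∫_{E_k} a` plus
a small error. Hence `∫_{E_k} |a_n|` is eventually at most `∫_{E_k} (|a| + 2|a₀|)` plus that error,
uniformly in `n`, and this tends to zero as `k → ∞` by absolute continuity of the integral.
So `a_n g` and `a g` have uniformly small integrals over `E_k`, and on `E_kᶜ` convergence
holds by assumption. -/

open MeasureTheory Filter Topology

theorem tendsto_of_forall_approx {ι α : Type*} [PseudoMetricSpace α] {l : Filter ι}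
    {x : ι → α} {x₀ : α}
    (h : ∀ ε > 0, ∃ (y : ι → α) (y₀ : α), Tendsto y l (𝓝 y₀) ∧
      (∀ᶠ n in l, dist (x n) (y n) ≤ ε) ∧ dist x₀ y₀ ≤ ε) :
    Tendsto x l (𝓝 x₀) := by
  refine Metric.tendsto_nhds.2 fun ε hε => ?_
  obtain ⟨y, y₀, hy, hxy, hy₀⟩ := h (ε / 4) (by positivity)
  filter_upwards [hxy, Metric.tendsto_nhds.1 hy (ε / 4) (by positivity)] with n hxy hyy
  calc dist (x n) x₀ ≤ dist (x n) (y n) + dist (y n) y₀ + dist y₀ x₀ := dist_triangle4 _ _ _ _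
    _ < ε := by rw [dist_comm y₀]; linarith

theorem abs_le_add_two_mul_abs_of_neg_le {t b : ℝ} (h : -b ≤ t) : |t| ≤ t + 2 * |b| :=
  abs_le.2 ⟨by linarith [le_abs_self b], by linarith [abs_nonneg b]⟩

section SetIntegral

variable {Q : Type*} [MeasurableSpace Q] {μ : Measure Q}

theorem dist_integral_mul_setIntegral_compl_le {f g : Q → ℝ} {s : Set Q} {K : ℝ}
    (hs : MeasurableSet s) (hf : Integrable f μ) (hg : AEStronglyMeasurable g μ)
    (hgK : ∀ x, |g x| ≤ K) :
    dist (∫ x, f x * g x ∂μ) (∫ x in sᶜ, f x * g x ∂μ) ≤ K * ∫ x in s, |f x| ∂μ := by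
  have hbound : ∀ x, ‖f x * g x‖ ≤ K * |f x| := fun x => by
    rw [Real.norm_eq_abs, abs_mul, mul_comm]
    exact mul_le_mul_of_nonneg_right (hgK x) (abs_nonneg _)
  rw [Real.dist_eq, ← integral_add_compl hs (hf.mul_bdd hg (ae_of_all _ hgK)),
    add_sub_cancel_right, ← integral_const_mul K fun x => |f x|]
  exact norm_integral_le_of_norm_le (hf.abs.const_mul K).integrableOn (ae_of_all _ hbound)

theorem setIntegral_abs_le_of_neg_le {f b : Q → ℝ} (s : Set Q) (hf : Integrable f μ)
    (hb : Integrable b μ) (hfb : ∀ᵐ x ∂μ, -b x ≤ f x) :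
    ∫ x in s, |f x| ∂μ ≤ ∫ x in s, f x ∂μ + 2 * ∫ x in s, |b x| ∂μ := by
  rw [← integral_const_mul, ← integral_add hf.integrableOn (hb.abs.const_mul 2).integrableOn]
  exact integral_mono_ae hf.abs.integrableOn (hf.add (hb.abs.const_mul 2)).integrableOn
    (ae_restrict_of_ae (hfb.mono fun x => abs_le_add_two_mul_abs_of_neg_le))

theorem eventually_setIntegral_lt_of_limsup_le {ι : Type*} {l : Filter ι} {f : ι → Q → ℝ}
    {F : Q → ℝ} {s : Set Q} (hs : MeasurableSet s) (hf : ∀ n, Integrable (f n) μ)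
    (hF : Integrable F μ) (hbdd : IsBoundedUnder (· ≤ ·) l fun n => ∫ x, f n x ∂μ)
    (hlimsup : limsup (fun n => ∫ x, f n x ∂μ) l ≤ ∫ x, F x ∂μ)
    (hcompl : Tendsto (fun n => ∫ x in sᶜ, f n x ∂μ) l (𝓝 (∫ x in sᶜ, F x ∂μ)))
    {δ : ℝ} (hδ : 0 < δ) :
    ∀ᶠ n in l, ∫ x in s, f n x ∂μ < ∫ x in s, F x ∂μ + δ := by
  have hlt :=
    eventually_lt_of_limsup_lt (hlimsup.trans_lt (lt_add_of_pos_right _ (half_pos hδ))) hbdd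
  have hgt := hcompl.eventually (eventually_gt_nhds (sub_lt_self _ (half_pos hδ)))
  filter_upwards [hlt, hgt] with n hlt hgt
  linarith [integral_add_compl hs (hf n), integral_add_compl hs hF]

theorem eventually_setIntegral_abs_lt {ι : Type*} {l : Filter ι} {f : ι → Q → ℝ}
    {F b : Q → ℝ} {s : Set Q} (hs : MeasurableSet s) (hf : ∀ n, Integrable (f n) μ)
    (hF : Integrable F μ) (hb : Integrable b μ) (hfb : ∀ n, ∀ᵐ x ∂μ, -b x ≤ f n x)
    (hbdd : IsBoundedUnder (· ≤ ·) l fun n => ∫ x, f n x ∂μ)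
    (hlimsup : limsup (fun n => ∫ x, f n x ∂μ) l ≤ ∫ x, F x ∂μ)
    (hcompl : Tendsto (fun n => ∫ x in sᶜ, f n x ∂μ) l (𝓝 (∫ x in sᶜ, F x ∂μ)))
    {δ : ℝ} (hδ : 0 < δ) :
    ∀ᶠ n in l, ∫ x in s, |f n x| ∂μ < ∫ x in s, |F x| ∂μ + 2 * ∫ x in s, |b x| ∂μ + δ := by
  have hF_le : ∫ x in s, F x ∂μ ≤ ∫ x in s, |F x| ∂μ :=
    integral_mono hF.integrableOn hF.abs.integrableOn fun x => le_abs_self _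
  filter_upwards [eventually_setIntegral_lt_of_limsup_le hs hf hF hbdd hlimsup hcompl hδ]
    with n hn
  linarith [setIntegral_abs_le_of_neg_le s (hf n) hb (hfb n)]

end SetIntegral

theorem weakL1_of_biting_general
    {Q : Type*} [MeasurableSpace Q] (μ : Measure Q)
    (a : ℕ → Q → ℝ) (alim a₀ : Q → ℝ)
    (hint : ∀ n, Integrable (a n) μ) (hlim_int : Integrable alim μ)
    (ha₀_int : Integrable a₀ μ)
    (hbdd : ∃ C : ℝ, ∀ n, ∫ x, |a n x| ∂μ ≤ C)
    (hA1 : ∀ n, ∀ᵐ x ∂μ, -(a₀ x) ≤ a n x)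
    (hA2 : ∃ E : ℕ → Set Q, (∀ k, MeasurableSet (E k)) ∧ Antitone E ∧
      Tendsto (fun k => μ (E k)) atTop (nhds 0) ∧
      ∀ k, ∀ g : Q → ℝ, Measurable g → (∃ Cg : ℝ, ∀ x, |g x| ≤ Cg) →
        Tendsto (fun n => ∫ x in (E k)ᶜ, a n x * g x ∂μ) atTop
          (nhds (∫ x in (E k)ᶜ, alim x * g x ∂μ)))
    (hA3 : limsup (fun n => ∫ x, a n x ∂μ) atTop ≤ ∫ x, alim x ∂μ) :
    ∀ g : Q → ℝ, Measurable g → (∃ Cg : ℝ, ∀ x, |g x| ≤ Cg) →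
      Tendsto (fun n => ∫ x, a n x * g x ∂μ) atTop (nhds (∫ x, alim x * g x ∂μ)) := by
  obtain ⟨E, hE, -, hEμ, hEconv⟩ := hA2
  obtain ⟨C, hC⟩ := hbdd
  have hbddAbove : IsBoundedUnder (· ≤ ·) atTop fun n => ∫ x, a n x ∂μ := isBoundedUnder_of
    ⟨C, fun n => (le_abs_self _).trans (abs_integral_le_integral_abs.trans (hC n))⟩
  have hη : Tendsto (fun k => ∫ x in E k, |alim x| ∂μ + 2 * ∫ x in E k, |a₀ x| ∂μ) atTop (𝓝 0) := by
    simpa using (hlim_int.abs.tendsto_setIntegral_nhds_zero hEμ).add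
      ((ha₀_int.abs.tendsto_setIntegral_nhds_zero hEμ).const_mul 2)
  rintro g hg ⟨M, hM⟩
  obtain ⟨K, hK, hgK⟩ : ∃ K > 0, ∀ x, |g x| ≤ K :=
    ⟨|M| + 1, by positivity, fun x => (hM x).trans (by linarith [le_abs_self M])⟩
  refine tendsto_of_forall_approx fun ε hε => ?_
  have hc : 0 < ε / (2 * K) := by positivity
  have hKε : K * (ε / (2 * K) + ε / (2 * K)) = ε := by field_simp; ring
  obtain ⟨k, hk⟩ := (hη.eventually (eventually_lt_nhds hc)).exists
  have ha₀k : 0 ≤ ∫ x in E k, |a₀ x| ∂μ := integral_nonneg fun _ => abs_nonneg _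
  have hone : Tendsto (fun n => ∫ x in (E k)ᶜ, a n x ∂μ) atTop (𝓝 (∫ x in (E k)ᶜ, alim x ∂μ)) := by
    simpa using hEconv k 1 measurable_const ⟨1, by simp⟩
  refine ⟨_, _, hEconv k g hg ⟨M, hM⟩, ?_, ?_⟩
  · filter_upwards [eventually_setIntegral_abs_lt (hE k) hint hlim_int ha₀_int hA1 hbddAbove hA3
      hone hc] with n hn
    calc _ ≤ K * ∫ x in E k, |a n x| ∂μ :=
          dist_integral_mul_setIntegral_compl_le (hE k) (hint n) hg.aestronglyMeasurable hgK
      _ ≤ ε := by rw [← hKε]; gcongr; linarith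
  · calc _ ≤ K * ∫ x in E k, |alim x| ∂μ :=
          dist_integral_mul_setIntegral_compl_le (hE k) hlim_int hg.aestronglyMeasurable hgK
      _ ≤ ε := by rw [← hKε]; gcongr; linarith

/-- **Lemma 4.4, biting lemma upgrade.** Let `(Q, μ)` be a finite measure space
and `(a_n)` a sequence bounded in `L¹(Q)` with `a_n ≥ −a₀` for some `0 ≤ a₀ ∈ L¹`. If `a_n`
converges to `a` in the biting sense and `limsup_n ∫ a_n ≤ ∫ a`, then `a_n ⇀ a` weakly
in `L¹(Q)`. -/
theorem weakL1_of_biting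
    {Q : Type*} [MeasurableSpace Q] (μ : Measure Q) [IsFiniteMeasure μ]
    (a : ℕ → Q → ℝ) (alim a₀ : Q → ℝ)
    (hint : ∀ n, Integrable (a n) μ) (hlim_int : Integrable alim μ)
    (ha₀_int : Integrable a₀ μ) (ha₀_nonneg : ∀ᵐ x ∂μ, 0 ≤ a₀ x)
    (hbdd : ∃ C : ℝ, ∀ n, ∫ x, |a n x| ∂μ ≤ C)
    (hA1 : ∀ n, ∀ᵐ x ∂μ, -(a₀ x) ≤ a n x)
    (hA2 : ∃ E : ℕ → Set Q, (∀ k, MeasurableSet (E k)) ∧ Antitone E ∧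
      Tendsto (fun k => μ (E k)) atTop (nhds 0) ∧
      ∀ k, ∀ g : Q → ℝ, Measurable g → (∃ Cg : ℝ, ∀ x, |g x| ≤ Cg) →
        Tendsto (fun n => ∫ x in (E k)ᶜ, a n x * g x ∂μ) atTop
          (nhds (∫ x in (E k)ᶜ, alim x * g x ∂μ)))
    (hA3 : limsup (fun n => ∫ x, a n x ∂μ) atTop ≤ ∫ x, alim x ∂μ) :
    ∀ g : Q → ℝ, Measurable g → (∃ Cg : ℝ, ∀ x, |g x| ≤ Cg) →
      Tendsto (fun n => ∫ x, a n x * g x ∂μ) atTop (nhds (∫ x, alim x * g x ∂μ)) :=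
  weakL1_of_biting_general μ a alim a₀ hint hlim_int ha₀_int hbdd hA1 hA2 hA3
end

section
/- Let (X, 𝒜, μ) be a finite measure space, let α ∈ (0,1) and η ≥ α. Let ϱ : X → ℝ be measurable with 0 < ϱ_* ≤ ϱ(x) ≤ ϱ^* < ∞ a.e. for constants ϱ_*, ϱ^*. Let θ : X → ℝ be measurable with θ ≥ θ_* > 0 a.e. and θ ∈ L^{1+η}(μ), and let w : X → [0,∞) be measurable with w ∈ L^{(1+η)/α}(μ). Assume that for every measurable h : X → [0,∞) with h ∈ L^{1+η}(μ), ∫_X ϱ (w − h^α)(θ − h) dμ ≥ 0. Then w = θ^α a.e. on X. -/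
/-!
Minty's trick without passing to a limit: test the inequality with the pointwise midpoint
`h = (θ + w ^ (1/α)) / 2`. Since `y ↦ y ^ α` is strictly increasing on `[0, ∞)`, the factors
`w - h ^ α` and `θ - h` have opposite signs, and both vanish exactly where `w = θ ^ α`; so the
integrand is `≤ 0`, and `< 0` off `{w = θ ^ α}`. Replacing `h` by `θ` outside the sets where `h`
and the integrand are bounded keeps the test function admissible and the integrand integrable,
and the inequality then forces the integrand to vanish a.e.
-/

open MeasureTheory Filter Set
open scoped ENNReal

theorem StrictMonoOn.sub_mul_sub_midpoint_neg {φ : ℝ → ℝ} {a c : ℝ}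
    (hφ : StrictMonoOn φ (uIcc a c)) (hac : a ≠ c) :
    (φ c - φ ((a + c) / 2)) * (a - (a + c) / 2) < 0 := by
  rcases hac.lt_or_gt with h | h
  · have : φ ((a + c) / 2) < φ c :=
      hφ (Icc_subset_uIcc ⟨by linarith, by linarith⟩) right_mem_uIcc (by linarith)
    nlinarith
  · have : φ c < φ ((a + c) / 2) :=
      hφ right_mem_uIcc (Icc_subset_uIcc' ⟨by linarith, by linarith⟩) (by linarith)
    nlinarith

theorem ae_eq_zero_of_nonpos_of_setIntegral_nonneg {X : Type*} [MeasurableSpace X]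
    {μ : Measure X} {F : X → ℝ} {s : ℕ → Set X} (hs : ∀ n, MeasurableSet (s n))
    (hcover : ∀ x, ∃ n, x ∈ s n) (hF : ∀ᵐ x ∂μ, F x ≤ 0)
    (hint : ∀ n, IntegrableOn F (s n) μ) (hnonneg : ∀ n, 0 ≤ ∫ x in s n, F x ∂μ) :
    ∀ᵐ x ∂μ, F x = 0 := by
  have hzero_on : ∀ n, ∀ᵐ x ∂μ, x ∈ s n → F x = 0 := by
    intro n
    have hint0 : ∫ x in s n, -F x ∂μ = 0 := by
      rw [integral_neg, neg_eq_zero]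
      exact le_antisymm (setIntegral_nonpos_of_ae hF) (hnonneg n)
    have := (setIntegral_eq_zero_iff_of_nonneg_ae (ae_restrict_of_ae (hF.mono fun x hx => by
      simpa using hx)) (hint n).neg).mp hint0
    rw [EventuallyEq, ae_restrict_iff' (hs n)] at this
    filter_upwards [this] with x hx hxs using neg_eq_zero.mp (hx hxs)
  filter_upwards [ae_all_iff.mpr hzero_on] with x hx
  obtain ⟨n, hn⟩ := hcover x
  exact hx n hn

theorem rpow_midpoint_mul_neg {α a b : ℝ} (hα : 0 < α) (ha : 0 ≤ a) (hb : 0 ≤ b)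
    (hne : b ≠ a ^ α) :
    (b - ((a + b ^ α⁻¹) / 2) ^ α) * (a - (a + b ^ α⁻¹) / 2) < 0 := by
  have hmono : StrictMonoOn (· ^ α) (uIcc a (b ^ α⁻¹)) :=
    (Real.strictMonoOn_rpow_Ici_of_exponent_pos hα).mono fun y hy =>
      le_trans (le_inf ha (by positivity)) hy.1
  have hac : a ≠ b ^ α⁻¹ := by
    rintro rfl
    exact hne (Real.rpow_inv_rpow hb hα.ne').symm
  simpa only [Real.rpow_inv_rpow hb hα.ne'] using hmono.sub_mul_sub_midpoint_neg hac

theorem rpow_midpoint_mul_nonpos {α a b : ℝ} (hα : 0 < α) (ha : 0 ≤ a) (hb : 0 ≤ b) :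
    (b - ((a + b ^ α⁻¹) / 2) ^ α) * (a - (a + b ^ α⁻¹) / 2) ≤ 0 := by
  rcases eq_or_ne b (a ^ α) with rfl | hne
  · simp [Real.rpow_rpow_inv ha hα.ne']
  · exact (rpow_midpoint_mul_neg hα ha hb hne).le

theorem ae_eq_rpow_of_minty_inequality {X : Type*} [MeasurableSpace X] {μ : Measure X}
    [IsFiniteMeasure μ] {α : ℝ} (hα : 0 < α) {p : ℝ≥0∞} {ϱ θ w : X → ℝ}
    (hϱ : Measurable ϱ) (hϱpos : ∀ᵐ x ∂μ, 0 < ϱ x)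
    (hθ : Measurable θ) (hθnn : ∀ x, 0 ≤ θ x) (hθLp : MemLp θ p μ)
    (hw : Measurable w) (hwnn : ∀ x, 0 ≤ w x)
    (hmin : ∀ h : X → ℝ, Measurable h → (∀ x, 0 ≤ h x) → MemLp h p μ →
      0 ≤ ∫ x, ϱ x * ((w x - h x ^ α) * (θ x - h x)) ∂μ) :
    ∀ᵐ x ∂μ, w x = θ x ^ α := by
  classical
  set m : X → ℝ := fun x => (θ x + w x ^ α⁻¹) / 2
  set G : X → ℝ := fun x => ϱ x * ((w x - m x ^ α) * (θ x - m x))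
  have hm : Measurable m := by fun_prop
  have hG : Measurable G := by fun_prop
  have hmnn : ∀ x, 0 ≤ m x := fun x => by have := hθnn x; have := hwnn x; positivity
  set s : ℕ → Set X := fun n => {x | m x ≤ n ∧ |G x| ≤ n}
  have hs : ∀ n, MeasurableSet (s n) := fun n =>
    (measurableSet_le hm measurable_const).inter (measurableSet_le hG.abs measurable_const)
  have hcover : ∀ x, ∃ n, x ∈ s n := fun x => by
    obtain ⟨n, hn⟩ := exists_nat_ge (max (m x) |G x|)
    exact ⟨n, (max_le_iff.mp hn)⟩
  have hGnonpos : ∀ᵐ x ∂μ, G x ≤ 0 := by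
    filter_upwards [hϱpos] with x hx
    exact mul_nonpos_of_nonneg_of_nonpos hx.le (rpow_midpoint_mul_nonpos hα (hθnn x) (hwnn x))
  have hGint : ∀ n, IntegrableOn G (s n) μ := fun n =>
    Measure.integrableOn_of_bounded (measure_ne_top μ _) hG.aestronglyMeasurable (M := n)
      (by filter_upwards [ae_restrict_mem (hs n)] with x hx using hx.2)
  have hG0 : ∀ᵐ x ∂μ, G x = 0 := by
    refine ae_eq_zero_of_nonpos_of_setIntegral_nonneg hs hcover hGnonpos hGint fun n => ?_
    set h := (s n).piecewise m θ
    have hmLp : MemLp m p (μ.restrict (s n)) :=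
      MemLp.of_bound hm.aestronglyMeasurable n (by
        filter_upwards [ae_restrict_mem (hs n)] with x hx
        rw [Real.norm_of_nonneg (hmnn x)]
        exact hx.1)
    have hintegrand : (fun x => ϱ x * ((w x - h x ^ α) * (θ x - h x))) = (s n).indicator G := by
      funext x
      by_cases hx : x ∈ s n <;> simp [h, hx, G]
    have hhnn : ∀ x, 0 ≤ h x := fun x => by
      by_cases hx : x ∈ s n <;> simp [h, hx, hmnn, hθnn]
    have := hmin h (hm.piecewise (hs n) hθ) hhnn (hmLp.piecewise (hs n) (hθLp.restrict _))
    rwa [hintegrand, integral_indicator (hs n)] at this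
  filter_upwards [hG0, hϱpos] with x hx0 hxpos
  by_contra hne
  exact (mul_neg_of_pos_of_neg hxpos (rpow_midpoint_mul_neg hα (hθnn x) (hwnn x) hne)).ne hx0

theorem temperature_power_identification_general
    {X : Type*} [MeasurableSpace X] (μ : Measure X) [IsFiniteMeasure μ]
    (α η : ℝ) (hα : α ∈ Set.Ioo (0 : ℝ) 1)
    (ϱ : X → ℝ) (hϱmeas : Measurable ϱ)
    (ϱstar ϱsup : ℝ) (hϱstar : 0 < ϱstar)
    (hϱbd : ∀ᵐ x ∂μ, ϱstar ≤ ϱ x ∧ ϱ x ≤ ϱsup)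
    (θ : X → ℝ) (hθmeas : Measurable θ)
    (θstar : ℝ) (hθstar : 0 < θstar) (hθlb : ∀ᵐ x ∂μ, θstar ≤ θ x)
    (hθLp : MemLp θ (ENNReal.ofReal (1 + η)) μ)
    (w : X → ℝ) (hwmeas : Measurable w) (hwnn : ∀ x, 0 ≤ w x)
    (hmin : ∀ h : X → ℝ, Measurable h → (∀ x, 0 ≤ h x) →
      MemLp h (ENNReal.ofReal (1 + η)) μ →
      0 ≤ ∫ x, ϱ x * ((w x - h x ^ α) * (θ x - h x)) ∂μ) :
    ∀ᵐ x ∂μ, w x = θ x ^ α := by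
  have hθeq : (fun x => max (θ x) 0) =ᵐ[μ] θ :=
    hθlb.mono fun x hx => max_eq_left (hθstar.le.trans hx)
  have key := ae_eq_rpow_of_minty_inequality hα.1 hϱmeas
    (hϱbd.mono fun x hx => hϱstar.trans_le hx.1) (hθmeas.max measurable_const)
    (fun x => le_max_right _ _) (hθLp.ae_eq hθeq.symm) hwmeas hwnn
    fun h hh hhnn hhLp => (hmin h hh hhnn hhLp).trans_eq <| integral_congr_ae <| by
      filter_upwards [hθeq] with x hx
      rw [hx]
  filter_upwards [key, hθeq] with x hx hθx
  rwa [hθx] at hx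

/-- **Minty trick for powers of the temperature.** On a finite measure space,
if `0 < ϱ_* ≤ ϱ ≤ ϱ^*` a.e., `θ ≥ θ_* > 0` a.e. with `θ ∈ L^{1+η}`, `w ≥ 0` with
`w ∈ L^{(1+η)/α}`, and `∫ ϱ (w − h^α)(θ − h) dμ ≥ 0` for every nonnegative
`h ∈ L^{1+η}`, then `w = θ^α` a.e. -/
theorem temperature_power_identification
    {X : Type*} [MeasurableSpace X] (μ : Measure X) [IsFiniteMeasure μ]
    (α η : ℝ) (hα : α ∈ Set.Ioo (0 : ℝ) 1) (hη : α ≤ η)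
    (ϱ : X → ℝ) (hϱmeas : Measurable ϱ)
    (ϱstar ϱsup : ℝ) (hϱstar : 0 < ϱstar)
    (hϱbd : ∀ᵐ x ∂μ, ϱstar ≤ ϱ x ∧ ϱ x ≤ ϱsup)
    (θ : X → ℝ) (hθmeas : Measurable θ)
    (θstar : ℝ) (hθstar : 0 < θstar) (hθlb : ∀ᵐ x ∂μ, θstar ≤ θ x)
    (hθLp : MemLp θ (ENNReal.ofReal (1 + η)) μ)
    (w : X → ℝ) (hwmeas : Measurable w) (hwnn : ∀ x, 0 ≤ w x)
    (hwLp : MemLp w (ENNReal.ofReal ((1 + η) / α)) μ)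
    (hmin : ∀ h : X → ℝ, Measurable h → (∀ x, 0 ≤ h x) →
      MemLp h (ENNReal.ofReal (1 + η)) μ →
      0 ≤ ∫ x, ϱ x * ((w x - h x ^ α) * (θ x - h x)) ∂μ) :
    ∀ᵐ x ∂μ, w x = θ x ^ α :=
  temperature_power_identification_general μ α η hα ϱ hϱmeas ϱstar ϱsup hϱstar hϱbd θ hθmeas θstar
    hθstar hθlb hθLp w hwmeas hwnn hmin
end
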